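/- For every n ≥ 1 and λ ∈ k there is a short exact sequence of representations of Q of the form 0 → P₄ⁿ → P₁ⁿ → M_n(λ) → 0, where P₄ⁿ and P₁ⁿ denote direct sums of n copies of P₄ and P₁ respectively. -/
import Mathlib


variable (k : Type) [Field k]

/-- A finite-dimensional representation of the quiver `Q` with vertices `1,2,3,4`
and arrows `a : 1 → 2`, `b : 1 → 3`, `c : 2 → 4`, `d : 3 → 4`. -/
structure QRep where
  V1 : Type
  V2 : Type
  V3 : Type
  V4 : Type
  [acg1 : AddCommGroup V1]
  [acg2 : AddCommGroup V2]
  [acg3 : AddCommGroup V3]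
  [acg4 : AddCommGroup V4]
  [mod1 : Module k V1]
  [mod2 : Module k V2]
  [mod3 : Module k V3]
  [mod4 : Module k V4]
  [fin1 : FiniteDimensional k V1]
  [fin2 : FiniteDimensional k V2]
  [fin3 : FiniteDimensional k V3]
  [fin4 : FiniteDimensional k V4]
  ma : V1 →ₗ[k] V2
  mb : V1 →ₗ[k] V3
  mc : V2 →ₗ[k] V4
  md : V3 →ₗ[k] V4

attribute [instance] QRep.acg1 QRep.acg2 QRep.acg3 QRep.acg4
  QRep.mod1 QRep.mod2 QRep.mod3 QRep.mod4
  QRep.fin1 QRep.fin2 QRep.fin3 QRep.fin4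

variable {k}

/-- Morphisms of representations of `Q`. -/
@[ext]
structure QHom (M N : QRep k) where
  f1 : M.V1 →ₗ[k] N.V1
  f2 : M.V2 →ₗ[k] N.V2
  f3 : M.V3 →ₗ[k] N.V3
  f4 : M.V4 →ₗ[k] N.V4
  comm_a : f2 ∘ₗ M.ma = N.ma ∘ₗ f1
  comm_b : f3 ∘ₗ M.mb = N.mb ∘ₗ f1
  comm_c : f4 ∘ₗ M.mc = N.mc ∘ₗ f2
  comm_d : f4 ∘ₗ M.md = N.md ∘ₗ f3

/-- Two representations are isomorphic iff there is a morphism all of whose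
components are bijective. -/
def QIso (M N : QRep k) : Prop :=
  ∃ f : QHom M N, Function.Bijective f.f1 ∧ Function.Bijective f.f2 ∧
    Function.Bijective f.f3 ∧ Function.Bijective f.f4

/-- The zero representation(s). -/
def QRep.IsZeroRep (M : QRep k) : Prop :=
  Subsingleton M.V1 ∧ Subsingleton M.V2 ∧ Subsingleton M.V3 ∧ Subsingleton M.V4

/-- Vertexwise direct sum of representations. -/
def QRep.dsum (M N : QRep k) : QRep k where
  V1 := M.V1 × N.V1
  V2 := M.V2 × N.V2
  V3 := M.V3 × N.V3
  V4 := M.V4 × N.V4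
  ma := M.ma.prodMap N.ma
  mb := M.mb.prodMap N.mb
  mc := M.mc.prodMap N.mc
  md := M.md.prodMap N.md

/-- Direct sum of `n` copies of a representation. -/
def QRep.dpow (M : QRep k) (n : ℕ) : QRep k where
  V1 := Fin n → M.V1
  V2 := Fin n → M.V2
  V3 := Fin n → M.V3
  V4 := Fin n → M.V4
  ma := M.ma.compLeft (Fin n)
  mb := M.mb.compLeft (Fin n)
  mc := M.mc.compLeft (Fin n)
  md := M.md.compLeft (Fin n)

/-- A representation is indecomposable if it is nonzero and not isomorphic to a
direct sum of two nonzero representations. -/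
def QRep.Indecomposable (M : QRep k) : Prop :=
  ¬ M.IsZeroRep ∧ ∀ A B : QRep k, QIso M (A.dsum B) → A.IsZeroRep ∨ B.IsZeroRep

/-- `0 → A → B → C → 0` is short exact (vertexwise). -/
def QShortExact {A B C : QRep k} (f : QHom A B) (g : QHom B C) : Prop :=
  (Function.Injective f.f1 ∧ Function.Injective f.f2 ∧
    Function.Injective f.f3 ∧ Function.Injective f.f4) ∧
  (Function.Surjective g.f1 ∧ Function.Surjective g.f2 ∧
    Function.Surjective g.f3 ∧ Function.Surjective g.f4) ∧
  (LinearMap.range f.f1 = LinearMap.ker g.f1 ∧ LinearMap.range f.f2 = LinearMap.ker g.f2 ∧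
    LinearMap.range f.f3 = LinearMap.ker g.f3 ∧ LinearMap.range f.f4 = LinearMap.ker g.f4)

variable (k)

/-- The `n×n` Jordan block with eigenvalue `lam`, as a linear endomorphism of `kⁿ`. -/
def jordan (n : ℕ) (lam : k) : (Fin n → k) →ₗ[k] (Fin n → k) :=
  Matrix.mulVecLin (Matrix.of fun i j : Fin n =>
    if i = j then lam else if (i : ℕ) + 1 = (j : ℕ) then 1 else 0)

/-- The representation `M_n(λ) = (kⁿ,kⁿ,kⁿ,kⁿ; id,id,id,J_n(λ))`. -/
def Mlam (n : ℕ) (lam : k) : QRep k where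
  V1 := Fin n → k
  V2 := Fin n → k
  V3 := Fin n → k
  V4 := Fin n → k
  ma := LinearMap.id
  mb := LinearMap.id
  mc := LinearMap.id
  md := jordan k n lam

/-- The indecomposable projective `P₁ = (k,k,k,k²)`. -/
def P1 : QRep k where
  V1 := k
  V2 := k
  V3 := k
  V4 := k × k
  ma := LinearMap.id
  mb := LinearMap.id
  mc := LinearMap.inl k k k
  md := LinearMap.inr k k k

/-- The indecomposable projective `P₂ = (0,k,0,k)`. -/
def P2 : QRep k where
  V1 := Fin 0 → k
  V2 := k
  V3 := Fin 0 → k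
  V4 := k
  ma := 0
  mb := 0
  mc := LinearMap.id
  md := 0

/-- The indecomposable projective `P₃ = (0,0,k,k)`. -/
def P3 : QRep k where
  V1 := Fin 0 → k
  V2 := Fin 0 → k
  V3 := k
  V4 := k
  ma := 0
  mb := 0
  mc := 0
  md := LinearMap.id

/-- The indecomposable projective `P₄ = (0,0,0,k)`. -/
def P4 : QRep k where
  V1 := Fin 0 → k
  V2 := Fin 0 → k
  V3 := Fin 0 → k
  V4 := k
  ma := 0
  mb := 0
  mc := 0
  md := 0

/-- For every `n ≥ 1` and `λ ∈ k` there is a short exact sequence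
`0 → P₄ⁿ → P₁ⁿ → M_n(λ) → 0` of representations of `Q`. -/
theorem stmt1 (k : Type) [Field k] (n : ℕ) (hn : 1 ≤ n) (lam : k) :
    ∃ (f : QHom ((P4 k).dpow n) ((P1 k).dpow n)) (g : QHom ((P1 k).dpow n) (Mlam k n lam)),
      QShortExact f g := by
  classical
  let J : (Fin n → k) →ₗ[k] (Fin n → k) := jordan k n lam
  let A : (Fin n → k × k) →ₗ[k] (Fin n → k) :=
    LinearMap.pi fun i => (LinearMap.fst k k k) ∘ₗ LinearMap.proj i
  let B : (Fin n → k × k) →ₗ[k] (Fin n → k) :=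
    LinearMap.pi fun i => (LinearMap.snd k k k) ∘ₗ LinearMap.proj i
  let F : (Fin n → k) →ₗ[k] (Fin n → k × k) :=
    LinearMap.pi fun i => ((LinearMap.proj i ∘ₗ (-J)).prod (LinearMap.proj i))
  let G : (Fin n → k × k) →ₗ[k] (Fin n → k) := A + J ∘ₗ B
  refine ⟨⟨0, 0, 0, F, ?_, ?_, ?_, ?_⟩, ⟨LinearMap.id, LinearMap.id, LinearMap.id, G,
    ?_, ?_, ?_, ?_⟩, ⟨?_, ?_, ?_, ?_⟩, ⟨?_, ?_, ?_, ?_⟩, ?_, ?_, ?_, ?_⟩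
  -- f : comm_a
  · exact LinearMap.ext fun x => rfl
  -- f : comm_b
  · exact LinearMap.ext fun x => rfl
  -- f : comm_c
  · refine LinearMap.ext fun x => ?_
    show F 0 = (fun i : Fin n => ((0 : k), (0 : k)))
    rw [map_zero]; rfl
  -- f : comm_d
  · refine LinearMap.ext fun x => ?_
    show F 0 = (fun i : Fin n => ((0 : k), (0 : k)))
    rw [map_zero]; rfl
  -- g : comm_a
  · exact LinearMap.ext fun x => rfl
  -- g : comm_b
  · exact LinearMap.ext fun x => rfl
  -- g : comm_c
  · refine LinearMap.ext fun x : Fin n → k => ?_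
    show x + J 0 = x
    rw [map_zero, add_zero]
  -- g : comm_d
  · refine LinearMap.ext fun x : Fin n → k => ?_
    show (0 : Fin n → k) + J x = J x
    rw [zero_add]
  -- injectivity of f
  · intro a b _
    funext i j
    exact j.elim0
  · intro a b _
    funext i j
    exact j.elim0
  · intro a b _
    funext i j
    exact j.elim0
  · show Function.Injective F
    intro x y h
    funext i
    exact congrArg Prod.snd (congrFun h i)
  -- surjectivity of g
  · exact fun y => ⟨y, rfl⟩
  · exact fun y => ⟨y, rfl⟩
  · exact fun y => ⟨y, rfl⟩
  · show Function.Surjective G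
    intro y
    refine ⟨fun i => (y i, 0), ?_⟩
    show y + J 0 = y
    rw [map_zero, add_zero]
  -- range = ker
  · show LinearMap.range (0 : (Fin n → Fin 0 → k) →ₗ[k] (Fin n → k)) =
      LinearMap.ker (LinearMap.id : (Fin n → k) →ₗ[k] (Fin n → k))
    rw [LinearMap.range_zero, LinearMap.ker_id]
  · show LinearMap.range (0 : (Fin n → Fin 0 → k) →ₗ[k] (Fin n → k)) =
      LinearMap.ker (LinearMap.id : (Fin n → k) →ₗ[k] (Fin n → k))
    rw [LinearMap.range_zero, LinearMap.ker_id]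
  · show LinearMap.range (0 : (Fin n → Fin 0 → k) →ₗ[k] (Fin n → k)) =
      LinearMap.ker (LinearMap.id : (Fin n → k) →ₗ[k] (Fin n → k))
    rw [LinearMap.range_zero, LinearMap.ker_id]
  · show LinearMap.range F = LinearMap.ker G
    ext v
    simp only [LinearMap.mem_range, LinearMap.mem_ker]
    constructor
    · rintro ⟨y, rfl⟩
      show -(J y) + J y = 0
      rw [neg_add_cancel]
    · intro hv
      refine ⟨fun i => (v i).2, funext fun i => ?_⟩
      have h2 : (v i).1 + J (fun j => (v j).2) i = 0 := congrFun hv i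
      show (-(J (fun j => (v j).2)) i, (v i).2) = v i
      refine Prod.ext ?_ rfl
      show -(J (fun j => (v j).2) i) = (v i).1
      linear_combination -h2
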